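/- (Inexact power method.) Let M ∈ R^{d×d} be a symmetric positive semidefinite matrix with eigenvalues λ₁ ≥ ⋯ ≥ λ_d > 0 and corresponding orthonormal eigenvectors u₁, …, u_d. Define Γ(M,t) = (2/λ_d^t)·t if λ₁ = 1 and Γ(M,t) = (2/λ_d^t)·(λ₁^t − 1)/(λ₁ − 1) if λ₁ ≠ 1. Let w₀ be a unit vector with (w₀ᵀ u₁)² ≥ α for some α > 0, fix ε ∈ (0,1) and κ ≥ 1, fix t ≥ ⌈(κ/2)·log(4/(αε))⌉, and let ŵ₀ = w₀ and ŵ_s (1 ≤ s ≤ t, ŵ_s ≠ 0) be any sequence with ‖ŵ_s − M ŵ_{s−1}‖ ≤ ε/(4Γ(M,t)) for each s. Then the normalized iterate w_t = ŵ_t/‖ŵ_t‖ satisfies Σ_{i ∈ [d] : λ_i ≤ (1 − 1/κ)λ₁} (w_tᵀ u_i)² ≤ ε and w_tᵀ M w_t ≥ (1 − 1/κ − ε) λ₁. -/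

import Mathlib

open Matrix Finset

/-- the Euclidean norm of a real vector -/
noncomputable def evnorm {ι : Type*} [Fintype ι] (v : ι → ℝ) : ℝ := Real.sqrt (∑ i, v i ^ 2)

/-- the Euclidean dot product of two real vectors -/
def vdot {ι : Type*} [Fintype ι] (u v : ι → ℝ) : ℝ := ∑ i, u i * v i

open Classical in
/-- `Γ(M,t)` expressed through the largest eigenvalue `l1 = λ₁` and
the smallest eigenvalue `ld = λ_d` of `M`. -/
noncomputable def Gamma (l1 ld : ℝ) (t : ℕ) : ℝ :=
  if l1 = 1 then 2 / ld ^ t * t else 2 / ld ^ t * ((l1 ^ t - 1) / (l1 - 1))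

/-! Let `x = Mᵗ w₀` be the exact iterate and `e = ŵ_t - x` the accumulated error. An error of
size `δ = ε / (4Γ)` made at one step is amplified by at most `λ₁` per later step, so
`‖e‖ ≤ δ (1 + λ₁ + ⋯ + λ₁ᵗ⁻¹) = ε λ_dᵗ / 8 ≤ (ε / 8) ‖x‖`. In the eigenbasis, the part of `x` on
eigenvalues `≤ (1 - 1/κ) λ₁` has norm at most `(1 - 1/κ)ᵗ λ₁ᵗ ≤ e^{-t/κ} λ₁ᵗ ≤ (√(αε)/2) λ₁ᵗ`,
while the `u₁`-component alone has size `≥ √α λ₁ᵗ`; so that part is at most `(√ε/2) ‖x‖`.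
A relative perturbation of size `ε/8` keeps it below `√ε ‖ŵ_t‖`, which is the first claim. The
second follows because the remaining mass `≥ 1 - ε` of `w_t` sits on eigenvalues
`> (1 - 1/κ) λ₁`. -/

open scoped RealInnerProductSpace
open WithLp (toLp)

theorem norm_sub_pow_apply_le_mul_geom_sum {R E : Type*} [Semiring R] [SeminormedAddCommGroup E]
    [Module R E] {T : E →ₗ[R] E} {L δ : ℝ} (hL₀ : 0 ≤ L) (hL : ∀ x, ‖T x‖ ≤ L * ‖x‖)
    {w : ℕ → E} {t : ℕ} (hw : ∀ s < t, ‖w (s + 1) - T (w s)‖ ≤ δ) :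
    ∀ s ≤ t, ‖w s - (T ^ s) (w 0)‖ ≤ δ * ∑ j ∈ Finset.range s, L ^ j := by
  intro s hs
  induction s with
  | zero => simp
  | succ s ih =>
    have hsplit : w (s + 1) - (T ^ (s + 1)) (w 0) =
        (w (s + 1) - T (w s)) + T (w s - (T ^ s) (w 0)) := by
      rw [map_sub, pow_succ', Module.End.mul_apply]
      abel
    calc ‖w (s + 1) - (T ^ (s + 1)) (w 0)‖
        ≤ δ + L * (δ * ∑ j ∈ Finset.range s, L ^ j) := by
          rw [hsplit]
          exact (norm_add_le _ _).trans <| add_le_add (hw s hs) <|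
            (hL _).trans (mul_le_mul_of_nonneg_left (ih (by omega)) hL₀)
      _ = δ * ∑ j ∈ Finset.range (s + 1), L ^ j := by rw [geom_sum_succ]; ring

theorem Gamma_eq_mul_geom_sum (l1 ld : ℝ) (t : ℕ) :
    Gamma l1 ld t = 2 / ld ^ t * ∑ j ∈ Finset.range t, l1 ^ j := by
  unfold Gamma
  split_ifs with h
  · simp [h]
  · rw [geom_sum_eq h]

theorem div_Gamma_mul_geom_sum_le {l1 ld ε : ℝ} (hl1 : 0 ≤ l1) (hld : 0 < ld) (hε : 0 ≤ ε)
    (t : ℕ) : ε / (4 * Gamma l1 ld t) * ∑ j ∈ Finset.range t, l1 ^ j ≤ ε * ld ^ t / 8 := by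
  rw [Gamma_eq_mul_geom_sum]
  obtain hG | hG := (Finset.sum_nonneg fun j _ => pow_nonneg hl1 j :
    0 ≤ ∑ j ∈ Finset.range t, l1 ^ j).eq_or_lt
  · rw [← hG]
    simp only [mul_zero]
    positivity
  · apply le_of_eq
    field_simp
    ring

theorem one_sub_inv_pow_le_inv_sqrt {κ x : ℝ} {t : ℕ} (hκ : 1 ≤ κ) (hx : 0 < x)
    (ht : κ / 2 * Real.log x ≤ t) : (1 - 1 / κ) ^ t ≤ (√x)⁻¹ := by
  have hκ₀ : 0 < κ := by linarith
  calc (1 - 1 / κ) ^ t ≤ Real.exp (-(1 / κ)) ^ t :=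
        pow_le_pow_left₀ (sub_nonneg.mpr ((div_le_one hκ₀).mpr hκ))
          (by linarith [Real.add_one_le_exp (-(1 / κ))]) t
    _ = Real.exp (-(t / κ)) := by rw [← Real.exp_nat_mul]; ring_nf
    _ ≤ Real.exp (-(Real.log x / 2)) := by
        rw [Real.exp_le_exp, neg_le_neg_iff, div_le_div_iff₀ two_pos hκ₀]
        linarith
    _ = (√x)⁻¹ := by rw [Real.exp_neg, Real.sqrt_eq_rpow, Real.rpow_def_of_pos hx]; ring_nf

namespace OrthonormalBasis

variable {ι E : Type*} [Fintype ι] [NormedAddCommGroup E] [InnerProductSpace ℝ E]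
  (b : OrthonormalBasis ι ℝ E) {T : E →ₗ[ℝ] E} {lam : ι → ℝ}

theorem inner_pow_apply_of_eigen (hT : ∀ i, T (b i) = lam i • b i) (n : ℕ) (i : ι) (v : E) :
    ⟪b i, (T ^ n) v⟫ = lam i ^ n * ⟪b i, v⟫ := by
  classical
  have step : ∀ v, ⟪b i, T v⟫ = lam i * ⟪b i, v⟫ := fun v => by
    conv_lhs => rw [← b.sum_repr' v]
    simp [hT, inner_sum, inner_smul_right, b.inner_eq_ite, mul_comm]
  induction n generalizing v with
  | zero => simp
  | succ n ih => rw [pow_succ', Module.End.mul_apply, step, ih, pow_succ']; ring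

theorem inner_apply_self_eq_sum_of_eigen (hT : ∀ i, T (b i) = lam i • b i) (v : E) :
    ⟪v, T v⟫ = ∑ i, lam i * ⟪b i, v⟫ ^ 2 := by
  rw [← b.sum_inner_mul_inner]
  refine Finset.sum_congr rfl fun i _ => ?_
  rw [← pow_one T, b.inner_pow_apply_of_eigen hT, real_inner_comm]
  ring

theorem norm_pow_apply_sq_eq_sum_of_eigen (hT : ∀ i, T (b i) = lam i • b i) (n : ℕ) (v : E) :
    ‖(T ^ n) v‖ ^ 2 = ∑ i, (lam i ^ n * ⟪b i, v⟫) ^ 2 := by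
  simp only [← b.sum_sq_inner_right, b.inner_pow_apply_of_eigen hT]

theorem norm_apply_le_of_eigen (hT : ∀ i, T (b i) = lam i • b i) {L : ℝ} (hL₀ : 0 ≤ L)
    (hL : ∀ i, |lam i| ≤ L) (v : E) : ‖T v‖ ≤ L * ‖v‖ := by
  refine le_of_sq_le_sq ?_ (by positivity)
  rw [← pow_one T, b.norm_pow_apply_sq_eq_sum_of_eigen hT, mul_pow, ← b.sum_sq_inner_right,
    Finset.mul_sum]
  gcongr with i
  rw [pow_one, mul_pow, ← sq_abs (lam i)]
  gcongr
  exact hL i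

theorem pow_mul_norm_le_norm_pow_apply (hT : ∀ i, T (b i) = lam i • b i) {ℓ : ℝ} (hℓ : 0 ≤ ℓ)
    (hmin : ∀ i, ℓ ≤ lam i) (n : ℕ) (v : E) : ℓ ^ n * ‖v‖ ≤ ‖(T ^ n) v‖ := by
  refine le_of_sq_le_sq ?_ (norm_nonneg _)
  rw [b.norm_pow_apply_sq_eq_sum_of_eigen hT, mul_pow, ← b.sum_sq_inner_right, Finset.mul_sum]
  gcongr with i
  rw [mul_pow]
  gcongr
  exact hmin i

theorem abs_pow_mul_inner_le_norm_pow_apply (hT : ∀ i, T (b i) = lam i • b i) (n : ℕ) (i : ι)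
    (v : E) : |lam i ^ n * ⟪b i, v⟫| ≤ ‖(T ^ n) v‖ := by
  rw [← b.inner_pow_apply_of_eigen hT]
  simpa using abs_real_inner_le_norm (b i) ((T ^ n) v)

noncomputable def partialNorm (S : Finset ι) (v : E) : ℝ := √(∑ i ∈ S, ⟪b i, v⟫ ^ 2)

theorem partialNorm_sq (S : Finset ι) (v : E) : b.partialNorm S v ^ 2 = ∑ i ∈ S, ⟪b i, v⟫ ^ 2 :=
  Real.sq_sqrt (by positivity)

theorem partialNorm_eq_norm (S : Finset ι) (v : E) :
    b.partialNorm S v = ‖toLp 2 fun i : S => ⟪b i, v⟫‖ := by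
  rw [partialNorm, EuclideanSpace.norm_eq, ← S.sum_coe_sort]
  simp [sq_abs]

theorem partialNorm_add_le (S : Finset ι) (v w : E) :
    b.partialNorm S (v + w) ≤ b.partialNorm S v + b.partialNorm S w := by
  simp only [partialNorm_eq_norm, inner_add_right]
  exact norm_add_le (toLp 2 fun i : S => ⟪b i, v⟫) (toLp 2 fun i : S => ⟪b i, w⟫)

theorem partialNorm_le_norm (S : Finset ι) (v : E) : b.partialNorm S v ≤ ‖v‖ := by
  rw [partialNorm, Real.sqrt_le_left (norm_nonneg v), ← b.sum_sq_inner_right]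
  exact Finset.sum_le_univ_sum_of_nonneg fun i => sq_nonneg _

theorem partialNorm_smul (S : Finset ι) (c : ℝ) (v : E) :
    b.partialNorm S (c • v) = |c| * b.partialNorm S v := by
  simp only [partialNorm, inner_smul_right, mul_pow, ← Finset.mul_sum, Real.sqrt_mul (sq_nonneg _),
    Real.sqrt_sq_eq_abs]

theorem partialNorm_pow_apply_le (hT : ∀ i, T (b i) = lam i • b i) {S : Finset ι} {c : ℝ}
    (hc : 0 ≤ c) (hS : ∀ i ∈ S, |lam i| ≤ c) (n : ℕ) (v : E) :
    b.partialNorm S ((T ^ n) v) ≤ c ^ n * ‖v‖ := by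
  rw [partialNorm, Real.sqrt_le_left (by positivity), mul_pow, ← b.sum_sq_inner_right,
    Finset.mul_sum]
  calc ∑ i ∈ S, ⟪b i, (T ^ n) v⟫ ^ 2 ≤ ∑ i ∈ S, (c ^ n) ^ 2 * ⟪b i, v⟫ ^ 2 := by
        gcongr with i hi
        rw [b.inner_pow_apply_of_eigen hT, mul_pow, ← sq_abs (lam i ^ n), abs_pow]
        gcongr
        exact hS i hi
    _ ≤ ∑ i, (c ^ n) ^ 2 * ⟪b i, v⟫ ^ 2 :=
        Finset.sum_le_univ_sum_of_nonneg fun i => by positivity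

theorem sum_inner_sq_inv_norm_smul_le {S : Finset ι} {v : E} {ε : ℝ} (hε : 0 ≤ ε)
    (hv : b.partialNorm S v ≤ √ε * ‖v‖) : ∑ i ∈ S, ⟪b i, ‖v‖⁻¹ • v⟫ ^ 2 ≤ ε := by
  rw [← partialNorm_sq, partialNorm_smul, abs_inv, abs_norm]
  rcases eq_or_ne v 0 with rfl | hv₀
  · simpa using hε
  calc (‖v‖⁻¹ * b.partialNorm S v) ^ 2 ≤ (‖v‖⁻¹ * (√ε * ‖v‖)) ^ 2 := by
        gcongr
        exact mul_nonneg (by positivity) (Real.sqrt_nonneg _)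
    _ = ε := by field_simp; exact Real.sq_sqrt hε

theorem partialNorm_add_le_sqrt_mul_norm {S : Finset ι} {x e : E} {ε : ℝ} (hε₀ : 0 ≤ ε)
    (hε₁ : ε ≤ 1) (hx : b.partialNorm S x ≤ √ε / 2 * ‖x‖) (he : ‖e‖ ≤ ε / 8 * ‖x‖) :
    b.partialNorm S (x + e) ≤ √ε * ‖x + e‖ := by
  have hsq : √ε ^ 2 = ε := Real.sq_sqrt hε₀
  have hs₀ : 0 ≤ √ε := Real.sqrt_nonneg ε
  have hs₁ : √ε ≤ 1 := Real.sqrt_le_one.mpr hε₁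
  have hcoef : √ε / 2 + ε / 8 ≤ √ε * (1 - ε / 8) := by nlinarith
  have hse : √ε * ‖e‖ ≤ √ε * (ε / 8 * ‖x‖) := mul_le_mul_of_nonneg_left he hs₀
  calc b.partialNorm S (x + e) ≤ b.partialNorm S x + ‖e‖ :=
        (b.partialNorm_add_le S x e).trans (add_le_add le_rfl (b.partialNorm_le_norm S e))
    _ ≤ (√ε / 2 + ε / 8) * ‖x‖ := by linarith
    _ ≤ √ε * (1 - ε / 8) * ‖x‖ := by gcongr
    _ ≤ √ε * (‖x‖ - ‖e‖) := by linarith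
    _ ≤ √ε * ‖x + e‖ := by
        gcongr
        simpa using norm_sub_norm_le x (-e)

theorem le_inner_apply_self_of_sum_inner_sq_le (hT : ∀ i, T (b i) = lam i • b i)
    (hlam : ∀ i, 0 ≤ lam i) {θ L ε : ℝ} (hθ₀ : 0 ≤ θ) (hθ₁ : θ ≤ 1) (hL : 0 ≤ L) {w : E}
    (hw : ‖w‖ = 1)
    (hmass : ∑ i ∈ Finset.univ.filter (fun i => lam i ≤ θ * L), ⟪b i, w⟫ ^ 2 ≤ ε) :
    (θ - ε) * L ≤ ⟪w, T w⟫ := by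
  classical
  set S := Finset.univ.filter (fun i => lam i ≤ θ * L)
  have hunit : ∑ i ∈ Sᶜ, ⟪b i, w⟫ ^ 2 = 1 - ∑ i ∈ S, ⟪b i, w⟫ ^ 2 := by
    rw [eq_sub_iff_add_eq', Finset.sum_add_sum_compl, b.sum_sq_inner_right, hw, one_pow]
  have hlow : 0 ≤ ∑ i ∈ S, lam i * ⟪b i, w⟫ ^ 2 :=
    Finset.sum_nonneg fun i _ => mul_nonneg (hlam i) (sq_nonneg _)
  have hhigh : θ * L * ∑ i ∈ Sᶜ, ⟪b i, w⟫ ^ 2 ≤ ∑ i ∈ Sᶜ, lam i * ⟪b i, w⟫ ^ 2 := by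
    rw [Finset.mul_sum]
    gcongr with i hi
    exact (lt_of_not_ge (by simpa [S] using hi)).le
  have hε : 0 ≤ ε := (Finset.sum_nonneg fun i _ => sq_nonneg _).trans hmass
  rw [b.inner_apply_self_eq_sum_of_eigen hT, ← Finset.sum_add_sum_compl S]
  rw [hunit] at hhigh
  nlinarith [mul_nonneg (mul_nonneg hθ₀ hL) (sub_nonneg.mpr hmass),
    mul_nonneg (mul_nonneg hε hL) (sub_nonneg.mpr hθ₁)]

theorem partialNorm_pow_apply_le_sqrt_mul_norm (hT : ∀ i, T (b i) = lam i • b i)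
    (hlam : ∀ i, 0 ≤ lam i) {i₀ : ι} {α ε κ : ℝ} (hα : 0 < α) (hε : 0 < ε) (hκ : 1 ≤ κ)
    {w₀ : E} (hw₀ : ‖w₀‖ = 1) (hinit : α ≤ ⟪b i₀, w₀⟫ ^ 2) {t : ℕ}
    (ht : κ / 2 * Real.log (4 / (α * ε)) ≤ t) :
    b.partialNorm (Finset.univ.filter fun i => lam i ≤ (1 - 1 / κ) * lam i₀) ((T ^ t) w₀) ≤
      √ε / 2 * ‖(T ^ t) w₀‖ := by
  have hθ : 0 ≤ 1 - 1 / κ := sub_nonneg.mpr ((div_le_one (by linarith)).mpr hκ)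
  have hcontract : (1 - 1 / κ) ^ t ≤ √α * √ε / 2 := by
    refine (one_sub_inv_pow_le_inv_sqrt hκ (by positivity) ht).trans_eq ?_
    rw [Real.sqrt_div' _ (by positivity), Real.sqrt_mul hα.le, inv_div,
      show (4 : ℝ) = 2 ^ 2 by norm_num, Real.sqrt_sq two_pos.le]
  have hstart : √α * lam i₀ ^ t ≤ ‖(T ^ t) w₀‖ := by
    have hsqrt : √α ≤ |⟪b i₀, w₀⟫| := by
      rw [← Real.sqrt_sq_eq_abs]; exact Real.sqrt_le_sqrt hinit
    calc √α * lam i₀ ^ t ≤ |⟪b i₀, w₀⟫| * lam i₀ ^ t := by gcongr; exact pow_nonneg (hlam i₀) t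
      _ = |lam i₀ ^ t * ⟪b i₀, w₀⟫| := by
          rw [abs_mul, abs_of_nonneg (pow_nonneg (hlam i₀) t), mul_comm]
      _ ≤ ‖(T ^ t) w₀‖ := b.abs_pow_mul_inner_le_norm_pow_apply hT t i₀ w₀
  calc b.partialNorm _ ((T ^ t) w₀) ≤ ((1 - 1 / κ) * lam i₀) ^ t * ‖w₀‖ :=
        b.partialNorm_pow_apply_le hT (mul_nonneg hθ (hlam i₀))
          (fun i hi => by simpa [abs_of_nonneg (hlam i)] using hi) t w₀
    _ = (1 - 1 / κ) ^ t * lam i₀ ^ t := by rw [hw₀, mul_one, mul_pow]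
    _ ≤ √α * √ε / 2 * lam i₀ ^ t := by gcongr; exact pow_nonneg (hlam i₀) t
    _ = √ε / 2 * (√α * lam i₀ ^ t) := by ring
    _ ≤ √ε / 2 * ‖(T ^ t) w₀‖ := by gcongr

theorem norm_sub_pow_apply_le_of_le_div_Gamma (hT : ∀ i, T (b i) = lam i • b i) {i₀ : ι}
    (hmax : ∀ i, lam i ≤ lam i₀) {ℓ : ℝ} (hℓ : 0 < ℓ) (hmin : ∀ i, ℓ ≤ lam i) {ε : ℝ}
    (hε : 0 ≤ ε) {w : ℕ → E} {t : ℕ}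
    (hstep : ∀ s < t, ‖w (s + 1) - T (w s)‖ ≤ ε / (4 * Gamma (lam i₀) ℓ t)) :
    ‖w t - (T ^ t) (w 0)‖ ≤ ε * ℓ ^ t / 8 := by
  have hlam : ∀ i, 0 ≤ lam i := fun i => hℓ.le.trans (hmin i)
  have hnorm := b.norm_apply_le_of_eigen hT (hlam i₀)
    (fun i => (abs_of_nonneg (hlam i)).trans_le (hmax i))
  exact (norm_sub_pow_apply_le_mul_geom_sum (hlam i₀) hnorm hstep t le_rfl).trans
    (div_Gamma_mul_geom_sum_le (hlam i₀) hℓ hε t)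

theorem inexact_power_method_of_eigen (hT : ∀ i, T (b i) = lam i • b i) {i₀ : ι}
    (hmax : ∀ i, lam i ≤ lam i₀) {ℓ : ℝ} (hℓ : 0 < ℓ) (hmin : ∀ i, ℓ ≤ lam i) {α ε κ : ℝ}
    (hα : 0 < α) (hε₀ : 0 < ε) (hε₁ : ε < 1) (hκ : 1 ≤ κ) {w₀ : E} (hw₀ : ‖w₀‖ = 1)
    (hinit : α ≤ ⟪b i₀, w₀⟫ ^ 2) {t : ℕ} (ht : κ / 2 * Real.log (4 / (α * ε)) ≤ t)
    {w : ℕ → E} (hw : w 0 = w₀)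
    (hstep : ∀ s < t, ‖w (s + 1) - T (w s)‖ ≤ ε / (4 * Gamma (lam i₀) ℓ t)) :
    ∑ i ∈ Finset.univ.filter (fun i => lam i ≤ (1 - 1 / κ) * lam i₀),
        ⟪b i, ‖w t‖⁻¹ • w t⟫ ^ 2 ≤ ε ∧
      (1 - 1 / κ - ε) * lam i₀ ≤ ⟪‖w t‖⁻¹ • w t, T (‖w t‖⁻¹ • w t)⟫ := by
  have hlam : ∀ i, 0 ≤ lam i := fun i => hℓ.le.trans (hmin i)
  set S := Finset.univ.filter fun i => lam i ≤ (1 - 1 / κ) * lam i₀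
  set x := (T ^ t) w₀
  have hx : ℓ ^ t ≤ ‖x‖ := by
    simpa [hw₀] using b.pow_mul_norm_le_norm_pow_apply hT hℓ.le hmin t w₀
  have herr : ‖w t - x‖ ≤ ε / 8 * ‖x‖ := by
    have := b.norm_sub_pow_apply_le_of_le_div_Gamma hT hmax hℓ hmin hε₀.le hstep
    rw [hw] at this
    linarith [mul_le_mul_of_nonneg_left hx hε₀.le]
  have hbad : b.partialNorm S (w t) ≤ √ε * ‖w t‖ := by
    have := b.partialNorm_add_le_sqrt_mul_norm hε₀.le hε₁.le
      (b.partialNorm_pow_apply_le_sqrt_mul_norm hT hlam hα hε₀ hκ hw₀ hinit ht) herr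
    rwa [add_sub_cancel] at this
  have hpos : 0 < ‖w t‖ := by
    have := norm_le_norm_add_norm_sub' x (w t)
    rw [norm_sub_rev] at this
    nlinarith [pow_pos hℓ t]
  have hmass := b.sum_inner_sq_inv_norm_smul_le hε₀.le hbad
  have hunit : ‖‖w t‖⁻¹ • w t‖ = 1 := by
    rw [norm_smul, norm_inv, norm_norm, inv_mul_cancel₀ hpos.ne']
  have hθ₀ : 0 ≤ 1 - 1 / κ := sub_nonneg.mpr ((div_le_one (by linarith)).mpr hκ)
  have hθ₁ : 1 - 1 / κ ≤ 1 := sub_le_self _ (by positivity)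
  exact ⟨hmass, b.le_inner_apply_self_of_sum_inner_sq_le hT hlam hθ₀ hθ₁ (hlam i₀) hunit hmass⟩

end OrthonormalBasis

theorem evnorm_eq_norm {ι : Type*} [Fintype ι] (v : ι → ℝ) : evnorm v = ‖toLp 2 v‖ := by
  simp [evnorm, EuclideanSpace.norm_eq, sq_abs]

theorem vdot_eq_inner {ι : Type*} [Fintype ι] (v w : ι → ℝ) :
    vdot v w = ⟪toLp 2 v, toLp 2 w⟫ := by
  simp [vdot, EuclideanSpace.inner_toLp_toLp, dotProduct, mul_comm]

theorem exists_orthonormalBasis_toLp_eq {ι : Type*} [Fintype ι] [DecidableEq ι]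
    {u : ι → ι → ℝ} (horth : ∀ i j, vdot (u i) (u j) = if i = j then (1 : ℝ) else 0) :
    ∃ b : OrthonormalBasis ι ℝ (EuclideanSpace ℝ ι), ∀ i, b i = toLp 2 (u i) := by
  have hon : Orthonormal ℝ fun i => toLp 2 (u i) :=
    orthonormal_iff_ite.mpr fun i j => by rw [← vdot_eq_inner, horth]
  exact ⟨.mk hon (hon.linearIndependent.span_eq_top_of_card_eq_finrank' (by simp)).ge,
    fun i => by simp⟩

/-- **inexact power method.** For a symmetric PSD matrix `M` with eigenvalues
`λ₁ ≥ ⋯ ≥ λ_d > 0`, a unit start `w₀` with `(w₀ᵀu₁)² ≥ α > 0`, and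
`t ≥ ⌈(κ/2)·log(4/(αε))⌉`, any inexact power sequence with per-step error `ε/(4Γ(M,t))`
satisfies, for the normalized iterate `w_t = ŵ_t/‖ŵ_t‖`,
`Σ_{i : λᵢ ≤ (1−1/κ)λ₁} (w_tᵀuᵢ)² ≤ ε` and `w_tᵀ M w_t ≥ (1 − 1/κ − ε)λ₁`. -/
theorem inexact_power_method {d : ℕ} (hd : 0 < d)
    (M : Matrix (Fin d) (Fin d) ℝ)
    (u : Fin d → Fin d → ℝ) (lam : Fin d → ℝ)
    (horth : ∀ i i', vdot (u i) (u i') = if i = i' then (1 : ℝ) else 0)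
    (heig : ∀ i, M.mulVec (u i) = lam i • u i)
    (hsorted : ∀ i i' : Fin d, i ≤ i' → lam i' ≤ lam i)
    (hpos : ∀ i, 0 < lam i)
    (α : ℝ) (hα : 0 < α)
    (w₀ : Fin d → ℝ) (hw₀ : evnorm w₀ = 1)
    (hinit : α ≤ (vdot w₀ (u ⟨0, hd⟩)) ^ 2)
    (ε κ : ℝ) (hε₀ : 0 < ε) (hε₁ : ε < 1) (hκ : 1 ≤ κ)
    (t : ℕ) (ht : (⌈κ / 2 * Real.log (4 / (α * ε))⌉ : ℝ) ≤ (t : ℝ))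
    (what : ℕ → Fin d → ℝ)
    (hhat₀ : what 0 = w₀)
    (hhat : ∀ s : ℕ, s < t →
      evnorm (what (s + 1) - M.mulVec (what s))
        ≤ ε / (4 * Gamma (lam ⟨0, hd⟩) (lam ⟨d - 1, by omega⟩) t)) :
    (∑ i ∈ Finset.univ.filter (fun i => lam i ≤ (1 - 1 / κ) * lam ⟨0, hd⟩),
        (vdot ((evnorm (what t))⁻¹ • what t) (u i)) ^ 2) ≤ ε ∧
    (1 - 1 / κ - ε) * lam ⟨0, hd⟩
      ≤ vdot ((evnorm (what t))⁻¹ • what t) (M.mulVec ((evnorm (what t))⁻¹ • what t)) := by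
  obtain ⟨b, hb⟩ := exists_orthonormalBasis_toLp_eq horth
  set T := Matrix.toLpLin 2 2 M
  have hTv : ∀ v, T (toLp 2 v) = toLp 2 (M *ᵥ v) := fun v => rfl
  have hT : ∀ i, T (b i) = lam i • b i := fun i => by rw [hb, hTv, heig, WithLp.toLp_smul]
  have key := b.inexact_power_method_of_eigen hT (i₀ := ⟨0, hd⟩)
    (fun i => hsorted _ _ (Nat.zero_le _)) (hpos ⟨d - 1, by omega⟩)
    (fun i => hsorted _ _ (Nat.le_sub_one_of_lt i.2)) hα hε₀ hε₁ hκ (w₀ := toLp 2 w₀)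
    (by rwa [← evnorm_eq_norm]) (by rwa [hb, real_inner_comm, ← vdot_eq_inner])
    ((Int.le_ceil _).trans ht) (w := fun s => toLp 2 (what s)) (by simp [hhat₀])
    (fun s hs => by simpa [evnorm_eq_norm, hTv] using hhat s hs)
  simpa [evnorm_eq_norm, vdot_eq_inner, hb, hTv, real_inner_comm] using key
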